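/- arXiv:2204.05175 — 2 statements merged into one kernel-verified Lean document; each statement's English description precedes it below -/
import Mathlib

section
/- Suppose Assumption 1 holds, write X = (X₁, X₋₁) with X₁ real-valued and X₋₁ taking values in ℝ^{p−1}, and let φ : ℝ → ℝ be a convex function with E[φ(Y)] < ∞. If E[φ(X₁ β₁)] = ∞ for all β₁ ≠ 0 and E[φ(X₋₁'β₋₁)] < ∞ for all β₋₁ ∈ ℝ^{p−1}, then the projection B₁ = {β₁ : (β₁, β₋₁) ∈ B for some β₋₁ ∈ ℝ^{p−1}} of the identified set B = {β ∈ ℝ^p : Y₀ ⪰cx X₀'β} equals {0}; in particular the first coordinate of β₀ is 0. -/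
/-!
If `β ∈ B`, applying the convex order to `φ (· + E[Y])` shows that `φ (X'β + c)` is
integrable for some constant `c`; by conditional Jensen the same holds for
`E[Y | X] = X'β₀ + α₀`. Integrability of `φ ∘ f` (for integrable `f`) is stable under convex
combinations, so combining `φ (X'β + c)` with `φ (-2 X₋₁'β₋₁)` and constants makes
`φ (X₁ β₁ / 2)` integrable, which forces `β₁ = 0`. Conversely `0 ∈ B` by Jensen's inequality.
-/

open MeasureTheory ProbabilityTheory Filter Set

noncomputable section

variable {Ω : Type*} [MeasurableSpace Ω]

/-- The centered version `A₀ = A - E[A]` of a real random variable. -/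
def cent (μ : Measure Ω) (f : Ω → ℝ) : Ω → ℝ := fun ω => f ω - ∫ ω', f ω' ∂μ

/-- The centered version `X₀ = X - E[X]` of an `ℝ^p`-valued random vector. -/
def centV {p : ℕ} (μ : Measure Ω) (X : Ω → EuclideanSpace ℝ (Fin p)) :
    Ω → EuclideanSpace ℝ (Fin p) := fun ω => X ω - ∫ ω', X ω' ∂μ

/-- Euclidean inner product `x'y`. -/
def dotp {p : ℕ} (x y : EuclideanSpace ℝ (Fin p)) : ℝ := ∑ i, x i * y i

/-- `A` dominates `B` in the convex order: for every convex `φ : ℝ → ℝ`,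
`E[φ(B)] ≤ E[φ(A)]`, where both expectations are well defined in `(-∞, +∞]`
(any convex `φ` is bounded below by an affine function, so for a random variable
with finite mean the expectation is `+∞` exactly when `φ ∘ ·` is not integrable). -/
def ConvexOrdGE (μ : Measure Ω) (A B : Ω → ℝ) : Prop :=
  ∀ φ : ℝ → ℝ, ConvexOn ℝ Set.univ φ →
    Integrable (fun ω => φ (A ω)) μ →
      Integrable (fun ω => φ (B ω)) μ ∧ ∫ ω, φ (B ω) ∂μ ≤ ∫ ω, φ (A ω) ∂μ

/-- The cumulative distribution function of a real random variable. -/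
def cdfRV (μ : Measure Ω) (A : Ω → ℝ) : ℝ → ℝ := fun t => (μ {ω | A ω ≤ t}).toReal

/-- Generalized inverse (quantile function) `F⁻¹(t) = inf {x : t ≤ F x}` of a cdf. -/
def qf (F : ℝ → ℝ) : ℝ → ℝ := fun t => sInf {x | t ≤ F x}

/-- The ratio of integrated quantiles `R(α, F, G)`. -/
def Rratio (α : ℝ) (F G : ℝ → ℝ) : ℝ := (∫ t in α..1, qf F t) / (∫ t in α..1, qf G t)

/-- `S(F, G) = inf_{α ∈ (0,1)} R(α, F, G)`. -/
def Sinf (F G : ℝ → ℝ) : ℝ := sInf {r | ∃ α ∈ Set.Ioo (0:ℝ) 1, r = Rratio α F G}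

/-- `S_ε(F, G) = min_{α ∈ [ε, 1-ε]} R(α, F, G)`. -/
def Seps (ε : ℝ) (F G : ℝ → ℝ) : ℝ := sInf {r | ∃ α ∈ Set.Icc ε (1 - ε), r = Rratio α F G}

/-- The covariance matrix `Var(X)` of an `ℝ^p`-valued random vector. -/
def covMatrix {p : ℕ} (μ : Measure Ω) (X : Ω → EuclideanSpace ℝ (Fin p)) :
    Matrix (Fin p) (Fin p) ℝ :=
  Matrix.of fun i j =>
    ∫ ω, (X ω i - ∫ ω', X ω' i ∂μ) * (X ω j - ∫ ω', X ω' j ∂μ) ∂μ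

/-- The identified set `B = {β ∈ ℝ^p : Y₀ ⪰cx X₀'β}`. -/
def Bset {p : ℕ} (μ : Measure Ω) (Y : Ω → ℝ) (X : Ω → EuclideanSpace ℝ (Fin p)) :
    Set (EuclideanSpace ℝ (Fin p)) :=
  {β | ConvexOrdGE μ (cent μ Y) (fun ω => dotp (centV μ X ω) β)}

/-- The regularized outer set `B_ε = {λ q : q ∈ S_p, 0 ≤ λ ≤ S_ε(F_{Y₀}, F_{X₀'q})}`. -/
def BepsSet {p : ℕ} (μ : Measure Ω) (Y : Ω → ℝ) (X : Ω → EuclideanSpace ℝ (Fin p)) (ε : ℝ) :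
    Set (EuclideanSpace ℝ (Fin p)) :=
  {x | ∃ (q : EuclideanSpace ℝ (Fin p)) (l : ℝ), ‖q‖ = 1 ∧ 0 ≤ l ∧
    l ≤ Seps ε (cdfRV μ (cent μ Y)) (cdfRV μ (fun ω => dotp (centV μ X ω) q)) ∧ x = l • q}

namespace ConvexOn

variable {α : Type*} {mα : MeasurableSpace α} {μ : Measure α} {φ : ℝ → ℝ}

lemma continuous_of_univ (hφ : ConvexOn ℝ univ φ) : Continuous φ :=
  continuousOn_univ.1 (hφ.continuousOn isOpen_univ)

/-- A convex `φ` is bounded below by an affine function. -/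
lemma integrable_comp_of_ae_le [IsFiniteMeasure μ] (hφ : ConvexOn ℝ univ φ) {f g : α → ℝ}
    (hf : Integrable f μ) (hg : Integrable g μ) (hle : (fun ω => φ (f ω)) ≤ᵐ[μ] g) :
    Integrable (fun ω => φ (f ω)) μ := by
  obtain ⟨c, c', hc⟩ := hφ.exists_affine_le_real isClosed_univ
    (hφ.continuous_of_univ.lowerSemicontinuous.lowerSemicontinuousOn _)
  exact integrable_of_le_of_le (hφ.continuous_of_univ.comp_aestronglyMeasurable hf.1)
    (ae_of_all _ fun ω => hc _ (mem_univ _)) hle ((hf.const_mul c).add (integrable_const c')) hg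

lemma integrable_comp_combo [IsFiniteMeasure μ] (hφ : ConvexOn ℝ univ φ) {u v : α → ℝ}
    (hu : Integrable u μ) (hv : Integrable v μ) (hφu : Integrable (fun ω => φ (u ω)) μ)
    (hφv : Integrable (fun ω => φ (v ω)) μ) {a b : ℝ} (ha : 0 ≤ a) (hb : 0 ≤ b)
    (hab : a + b = 1) :
    Integrable (fun ω => φ (a * u ω + b * v ω)) μ :=
  hφ.integrable_comp_of_ae_le ((hu.const_mul a).add (hv.const_mul b))
    ((hφu.const_mul a).add (hφv.const_mul b))
    (ae_of_all _ fun _ => hφ.2 (mem_univ _) (mem_univ _) ha hb hab)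

lemma integrable_comp_condExp [IsFiniteMeasure μ] {m : MeasurableSpace α} (hm : m ≤ mα)
    (hφ : ConvexOn ℝ univ φ) {f : α → ℝ} (hf : Integrable f μ)
    (hφf : Integrable (fun ω => φ (f ω)) μ) :
    Integrable (fun ω => φ (μ[f|m] ω)) μ :=
  hφ.integrable_comp_of_ae_le integrable_condExp integrable_condExp
    (hφ.map_condExp_le_of_finiteDimensional hm hf hφf)

/-- `-V - c` is the midpoint of `-2 V` and `-2 c`, and `U / 2` that of `U + V + c`
and `-V - c`. -/
lemma integrable_comp_half [IsFiniteMeasure μ] (hφ : ConvexOn ℝ univ φ) {U V : α → ℝ}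
    (hU : Integrable U μ) (hV : Integrable V μ) (c : ℝ)
    (hUV : Integrable (fun ω => φ (U ω + V ω + c)) μ)
    (hV2 : Integrable (fun ω => φ (-2 * V ω)) μ) :
    Integrable (fun ω => φ (U ω / 2)) μ := by
  have hnegV : Integrable (fun ω => φ (-V ω - c)) μ := by
    refine (hφ.integrable_comp_combo (hV.const_mul (-2)) (integrable_const (-2 * c)) hV2
      (integrable_const _) (a := 1 / 2) (b := 1 / 2) (by norm_num) (by norm_num)
      (by norm_num)).congr (ae_of_all _ fun ω => ?_)
    dsimp only
    congr 1
    ring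
  refine (hφ.integrable_comp_combo (((hU.add hV).add (integrable_const c)))
    ((hV.neg).sub (integrable_const c)) hUV hnegV (a := 1 / 2) (b := 1 / 2) (by norm_num)
    (by norm_num) (by norm_num)).congr (ae_of_all _ fun ω => ?_)
  simp only [Pi.add_apply, Pi.neg_apply, Pi.sub_apply]
  congr 1
  ring

end ConvexOn

variable {μ : Measure Ω}

lemma convexOrdGE_const_integral [IsProbabilityMeasure μ] {A : Ω → ℝ} (hA : Integrable A μ) :
    ConvexOrdGE μ A (fun _ => ∫ ω, A ω ∂μ) := fun _ hφ hφA =>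
  ⟨integrable_const _, by
    simpa using hφ.map_integral_le hφ.continuous_of_univ.continuousOn isClosed_univ
      (ae_of_all _ fun _ => mem_univ _) hA hφA⟩

lemma ConvexOrdGE.integrable_comp_add_integral {A B : Ω → ℝ} {φ : ℝ → ℝ}
    (h : ConvexOrdGE μ (cent μ A) B) (hφ : ConvexOn ℝ univ φ)
    (hφA : Integrable (fun ω => φ (A ω)) μ) :
    Integrable (fun ω => φ (B ω + ∫ ω', A ω' ∂μ)) μ := by
  refine (h _ (by simpa using hφ.translate_left (∫ ω', A ω' ∂μ)) ?_).1
  simpa [cent] using hφA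

lemma dotp_sub_left {p : ℕ} (x y β : EuclideanSpace ℝ (Fin p)) :
    dotp (x - y) β = dotp x β - dotp y β := by
  simp only [dotp, PiLp.sub_apply, sub_mul, Finset.sum_sub_distrib]

lemma dotp_succ {p : ℕ} (x β : EuclideanSpace ℝ (Fin (p + 1))) :
    dotp x β = x 0 * β 0 + ∑ i : Fin p, x i.succ * β i.succ :=
  Fin.sum_univ_succ _

lemma zero_mem_Bset [IsProbabilityMeasure μ] {p : ℕ} {Y : Ω → ℝ} (hY : Integrable Y μ)
    (X : Ω → EuclideanSpace ℝ (Fin p)) : 0 ∈ Bset μ Y X := by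
  have hcent : Integrable (cent μ Y) μ := hY.sub (integrable_const _)
  have hmean : ∫ ω, cent μ Y ω ∂μ = 0 := by
    simp [cent, integral_sub hY (integrable_const _)]
  simpa [Bset, dotp, hmean] using convexOrdGE_const_integral hcent

/-- Otherwise `φ (X₁ β₁ / 2)` would be integrable, by `ConvexOn.integrable_comp_half`
with `V = X₋₁'β₋₁`. -/
lemma not_integrable_comp_dotp_add [IsFiniteMeasure μ] {p : ℕ}
    {X : Ω → EuclideanSpace ℝ (Fin (p + 1))} (hX : ∀ i, Integrable (fun ω => X ω i) μ)
    {φ : ℝ → ℝ} (hφ : ConvexOn ℝ univ φ)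
    (hφ1 : ∀ b₁ : ℝ, b₁ ≠ 0 → ¬ Integrable (fun ω => φ (X ω 0 * b₁)) μ)
    (hφrest : ∀ brest : Fin p → ℝ,
      Integrable (fun ω => φ (∑ i : Fin p, X ω i.succ * brest i)) μ)
    {β : EuclideanSpace ℝ (Fin (p + 1))} (hβ : β 0 ≠ 0) (c : ℝ) :
    ¬ Integrable (fun ω => φ (dotp (X ω) β + c)) μ := by
  intro h
  have hV : Integrable (fun ω => ∑ i : Fin p, X ω i.succ * β i.succ) μ :=
    integrable_finsetSum _ fun i _ => (hX i.succ).mul_const _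
  refine hφ1 (β 0 / 2) (div_ne_zero hβ two_ne_zero) ?_
  refine (hφ.integrable_comp_half ((hX 0).mul_const (β 0)) hV c
    (by simpa only [dotp_succ] using h) ?_).congr (ae_of_all _ fun ω => ?_)
  · refine (hφrest fun i => -2 * β i.succ).congr (ae_of_all _ fun ω => ?_)
    simp only [Finset.mul_sum]
    congr 1
    exact Finset.sum_congr rfl fun i _ => by ring
  · dsimp only
    congr 1
    ring

theorem stmt6_general (μ : Measure Ω) [IsProbabilityMeasure μ] {p : ℕ}
    (Y : Ω → ℝ) (X : Ω → EuclideanSpace ℝ (Fin (p + 1)))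
    (hXm : Measurable X)
    (hY2 : MemLp Y 2 μ) (hX2 : MemLp X 2 μ)
    (α₀ : ℝ) (β₀ : EuclideanSpace ℝ (Fin (p + 1)))
    (hmod : μ[Y | MeasurableSpace.comap X inferInstance]
      =ᵐ[μ] fun ω => α₀ + dotp (X ω) β₀)
    (φ : ℝ → ℝ) (hφ : ConvexOn ℝ Set.univ φ)
    (hφY : Integrable (fun ω => φ (Y ω)) μ)
    (hφ1 : ∀ b₁ : ℝ, b₁ ≠ 0 → ¬ Integrable (fun ω => φ (X ω 0 * b₁)) μ)
    (hφrest : ∀ brest : Fin p → ℝ,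
      Integrable (fun ω => φ (∑ i : Fin p, X ω i.succ * brest i)) μ) :
    {b : ℝ | ∃ β ∈ Bset μ Y X, β 0 = b} = {0} ∧ β₀ 0 = 0 := by
  have hY : Integrable Y μ := hY2.integrable one_le_two
  have hX : ∀ i, Integrable (fun ω => X ω i) μ := fun i =>
    ((EuclideanSpace.proj (𝕜 := ℝ) i).comp_memLp' hX2).integrable one_le_two
  have hB : ∀ β ∈ Bset μ Y X, β 0 = 0 := fun β hβ => by
    by_contra hβ0
    refine not_integrable_comp_dotp_add hX hφ hφ1 hφrest hβ0
      ((∫ ω, Y ω ∂μ) - dotp (∫ ω, X ω ∂μ) β) ?_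
    refine (hβ.integrable_comp_add_integral hφ hφY).congr (ae_of_all _ fun ω => ?_)
    simp only [centV, dotp_sub_left]
    congr 1
    ring
  have hβ₀ : β₀ 0 = 0 := by
    by_contra hβ0
    refine not_integrable_comp_dotp_add hX hφ hφ1 hφrest hβ0 α₀ ?_
    refine (hφ.integrable_comp_condExp hXm.comap_le hY hφY).congr ?_
    filter_upwards [hmod] with ω hω
    rw [hω, add_comm]
  refine ⟨eq_singleton_iff_unique_mem.2 ⟨⟨0, zero_mem_Bset hY X, rfl⟩, ?_⟩, hβ₀⟩
  rintro b ⟨β, hβ, rfl⟩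
  exact hB β hβ

/-- Under Assumption 1 (with dimension `p + 1`, writing
`X = (X₁, X₋₁)` where `X₁ = X 0` and `X₋₁ = (X 1, ..., X p)`), if `φ` is convex with
`E[φ(Y)] < ∞`, `E[φ(X₁ β₁)] = ∞` for all `β₁ ≠ 0` and `E[φ(X₋₁'β₋₁)] < ∞` for all
`β₋₁ ∈ ℝ^p`, then the projection of the identified set on the first coordinate is
`{0}`; in particular the first coordinate of `β₀` is `0`. -/
theorem stmt6 (μ : Measure Ω) [IsProbabilityMeasure μ] {p : ℕ}
    (Y : Ω → ℝ) (X : Ω → EuclideanSpace ℝ (Fin (p + 1)))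
    (hYm : Measurable Y) (hXm : Measurable X)
    (hY2 : MemLp Y 2 μ) (hX2 : MemLp X 2 μ)
    (hVarY : 0 < variance Y μ) (hVarX : (covMatrix μ X).det ≠ 0)
    (α₀ : ℝ) (β₀ : EuclideanSpace ℝ (Fin (p + 1)))
    (hmod : μ[Y | MeasurableSpace.comap X inferInstance]
      =ᵐ[μ] fun ω => α₀ + dotp (X ω) β₀)
    (φ : ℝ → ℝ) (hφ : ConvexOn ℝ Set.univ φ)
    (hφY : Integrable (fun ω => φ (Y ω)) μ)
    (hφ1 : ∀ b₁ : ℝ, b₁ ≠ 0 → ¬ Integrable (fun ω => φ (X ω 0 * b₁)) μ)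
    (hφrest : ∀ brest : Fin p → ℝ,
      Integrable (fun ω => φ (∑ i : Fin p, X ω i.succ * brest i)) μ) :
    {b : ℝ | ∃ β ∈ Bset μ Y X, β 0 = b} = {0} ∧ β₀ 0 = 0 :=
  stmt6_general μ Y X hXm hY2 hX2 α₀ β₀ hmod φ hφ hφY hφ1 hφrest
end
end

section
/- Suppose Assumption 1 holds and set U = Y₀ − X₀'β₀. If there exists a convex function φ : ℝ → ℝ such that E[φ(λU)] < E[φ(λ X₀'β₀)] = ∞ for all λ > 1, then for every c > 0, Y₀ does not dominate (1+c) X₀'β₀ in the convex order, i.e., (1+c)β₀ ∉ B = {β ∈ ℝ^p : Y₀ ⪰cx X₀'β}; consequently β₀ lies on the topological boundary ∂B of B. -/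
/-!
Write `V = X₀'β₀` and `U = Y₀ - V`. Assumption 1 makes `V` the conditional expectation of `Y₀`
given `X`, so conditional Jensen gives `Y₀ ⪰cx V`, i.e. `β₀ ∈ B`.

For `c > 0` and `λ = (1 + c) / c`, `Y₀ = U + V` is the convex combination
`(1/λ) (λU) + (1 - 1/λ) ((1 + c) V)`. If `Y₀ ⪰cx (1 + c) V`, then for every convex `G`
of linear growth, `E G((1 + c) V) ≤ E G(Y₀) ≤ (1/λ) E G(λU) + (1 - 1/λ) E G((1 + c) V)`,
so `E G((1 + c) V) ≤ E G(λU)`. Approximating `φ` from below by finite maxima of affine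
functions and passing to the limit by monotone convergence, `E φ((1 + c) V) ≤ E φ(λU) < ∞`,
contradicting the hypothesis. Since `(1 + c) β₀ → β₀` as `c ↓ 0`, `β₀` is not interior to `B`.
-/

open MeasureTheory ProbabilityTheory Filter Set

noncomputable section

variable {Ω : Type*} [MeasurableSpace Ω]

open scoped InnerProductSpace Topology

lemma dotp_eq_inner {p : ℕ} (x y : EuclideanSpace ℝ (Fin p)) : dotp x y = ⟪y, x⟫_ℝ := by
  simp [dotp, PiLp.inner_apply]

lemma dotp_smul_right {p : ℕ} (x y : EuclideanSpace ℝ (Fin p)) (c : ℝ) :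
    dotp x (c • y) = c * dotp x y := by
  simp [dotp_eq_inner, real_inner_smul_left]

lemma mem_frontier_of_forall_one_add_smul_notMem {E : Type*} [TopologicalSpace E]
    [AddCommGroup E] [Module ℝ E] [ContinuousSMul ℝ E] {s : Set E} {x : E} (hx : x ∈ s)
    (h : ∀ c : ℝ, 0 < c → (1 + c) • x ∉ s) : x ∈ frontier s := by
  refine ⟨subset_closure hx, fun hint => ?_⟩
  have htend : Tendsto (fun c : ℝ => (1 + c) • x) (𝓝[>] 0) (𝓝 x) := by
    have : Tendsto (fun c : ℝ => (1 + c) • x) (𝓝 0) (𝓝 (((1 : ℝ) + 0) • x)) :=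
      (by fun_prop : Continuous fun c : ℝ => (1 + c) • x).tendsto 0
    simpa using this.mono_left nhdsWithin_le_nhds
  obtain ⟨c, hcs, hc⟩ :=
    ((htend.eventually (isOpen_interior.mem_nhds hint)).and self_mem_nhdsWithin).exists
  exact h c hc (interior_subset hcs)

lemma convexOn_partialSups {𝕜 E β : Type*} [Semiring 𝕜] [PartialOrder 𝕜] [AddCommMonoid E]
    [AddCommMonoid β] [LinearOrder β] [IsOrderedAddMonoid β] [SMul 𝕜 E] [Module 𝕜 β]
    [PosSMulStrictMono 𝕜 β] {s : Set E} {g : ℕ → E → β} (hg : ∀ i, ConvexOn 𝕜 s (g i))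
    (n : ℕ) : ConvexOn 𝕜 s (partialSups g n) := by
  induction n with
  | zero => simpa using hg 0
  | succ n ih => simpa [partialSups_succ] using ih.sup (hg (n + 1))

lemma integrable_partialSups {α : Type*} [MeasurableSpace α] {μ : Measure α}
    {F : ℕ → α → ℝ} (hF : ∀ i, Integrable (F i) μ) (n : ℕ) :
    Integrable (partialSups F n) μ := by
  induction n with
  | zero => simpa using hF 0
  | succ n ih => simpa [partialSups_succ] using ih.sup (hF (n + 1))

lemma ConvexOn.exists_affine_partialSups_tendsto {φ : ℝ → ℝ} (hφ : ConvexOn ℝ univ φ) :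
    ∃ a b : ℕ → ℝ, ∀ x, (∀ n, partialSups (fun i y => a i * y + b i) n x ≤ φ x) ∧
      Tendsto (fun n => partialSups (fun i y => a i * y + b i) n x) atTop (𝓝 (φ x)) := by
  have hcont : Continuous φ := continuousOn_univ.1 (hφ.continuousOn isOpen_univ)
  obtain ⟨l, c, hle, hsup⟩ := hφ.real_univ_sSup_of_nat_affine_eq hcont.lowerSemicontinuous
  have hl : ∀ i y, l i y = l i 1 * y := fun i y => by
    rw [mul_comm, ← smul_eq_mul, ← map_smul, smul_eq_mul, mul_one]
  refine ⟨fun i => l i 1, c, fun x => ?_⟩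
  have hle' : ∀ i, l i 1 * x + c i ≤ φ x := fun i => by
    simpa only [Pi.add_apply, Function.const_apply, hl _ x] using hle i x
  have hbdd : BddAbove (range fun i => l i 1 * x + c i) :=
    ⟨φ x, by rintro _ ⟨i, rfl⟩; exact hle' i⟩
  have hsup' : ⨆ i, l i 1 * x + c i = φ x := by
    simpa only [iSup_apply, Pi.add_apply, Function.const_apply, hl _ x] using congrFun hsup x
  simp only [Pi.partialSups_apply]
  refine ⟨fun n => partialSups_le _ _ _ fun i _ => hle' i, ?_⟩
  rw [← hsup', ← ciSup_partialSups_eq hbdd]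
  exact tendsto_atTop_ciSup (partialSups _).monotone (bddAbove_range_partialSups.2 hbdd)

theorem integrable_of_tendsto_of_monotone_of_integral_le {α : Type*} [MeasurableSpace α]
    {μ : Measure α} {f : ℕ → α → ℝ} {g : α → ℝ} {M : ℝ} (hf : ∀ n, Integrable (f n) μ)
    (hmono : ∀ᵐ x ∂μ, Monotone (f · x)) (hlim : ∀ᵐ x ∂μ, Tendsto (f · x) atTop (𝓝 (g x)))
    (hM : ∀ n, ∫ x, f n x ∂μ ≤ M) : Integrable g μ := by
  have hnonneg : ∀ᵐ x ∂μ, ∀ n, 0 ≤ f n x - f 0 x := by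
    filter_upwards [hmono] with x hx n using sub_nonneg.2 (hx (Nat.zero_le n))
  have hgnonneg : 0 ≤ᵐ[μ] g - f 0 := by
    filter_upwards [hmono, hlim] with x hx hxl
    exact sub_nonneg.2 (ge_of_tendsto' hxl fun n => hx (Nat.zero_le n))
  suffices Integrable (g - f 0) μ by simpa using this.add (hf 0)
  refine ⟨(aestronglyMeasurable_of_tendsto_ae atTop (fun n => (hf n).1) hlim).sub (hf 0).1,
    (hasFiniteIntegral_iff_ofReal hgnonneg).2 ?_⟩
  have hlint := lintegral_tendsto_of_tendsto_of_monotone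
    (f := fun n x => ENNReal.ofReal (f n x - f 0 x)) (F := fun x => ENNReal.ofReal ((g - f 0) x))
    (fun n => ((hf n).sub (hf 0)).aemeasurable.ennreal_ofReal)
    (by filter_upwards [hmono] with x hx n m hnm using
      ENNReal.ofReal_le_ofReal (sub_le_sub_right (hx hnm) _))
    (by filter_upwards [hlim] with x hx using
      (ENNReal.continuous_ofReal.tendsto _).comp (hx.sub_const _))
  refine (le_of_tendsto' hlint fun n => ?_).trans_lt
    (ENNReal.ofReal_lt_top (r := M - ∫ x, f 0 x ∂μ))
  rw [← ofReal_integral_eq_lintegral_ofReal (f := fun x => f n x - f 0 x) ((hf n).sub (hf 0))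
    (by filter_upwards [hnonneg] with x hx using hx n), integral_sub (hf n) (hf 0)]
  exact ENNReal.ofReal_le_ofReal (by linarith [hM n])

section ConvexOrder

variable {μ : Measure Ω}

lemma ConvexOrdGE.congr_right {A B B' : Ω → ℝ} (h : ConvexOrdGE μ A B) (hB : B =ᵐ[μ] B') :
    ConvexOrdGE μ A B' := by
  intro φ hφ hφA
  obtain ⟨hint, hle⟩ := h φ hφ hφA
  have hφB : (fun ω => φ (B ω)) =ᵐ[μ] fun ω => φ (B' ω) := hB.fun_comp φ
  exact ⟨hint.congr hφB, integral_congr_ae hφB ▸ hle⟩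

theorem convexOrdGE_condExp {α : Type*} {m mα : MeasurableSpace α} {μ : Measure α}
    [IsFiniteMeasure μ] (hm : m ≤ mα) {Z : α → ℝ} (hZ : Integrable Z μ) :
    ConvexOrdGE μ Z (μ[Z | m]) := by
  intro φ hφ hφZ
  have hcont : Continuous φ := continuousOn_univ.1 (hφ.continuousOn isOpen_univ)
  have hjensen := hφ.map_condExp_le_of_finiteDimensional hm hZ hφZ
  obtain ⟨a, b, hab⟩ :=
    hφ.exists_affine_le_real isClosed_univ (hcont.lowerSemicontinuous.lowerSemicontinuousOn univ)
  have hint : Integrable (fun ω => φ (μ[Z | m] ω)) μ :=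
    integrable_of_le_of_le (hcont.comp_aestronglyMeasurable integrable_condExp.1)
      (ae_of_all _ fun ω => hab _ trivial) hjensen
      ((integrable_condExp.const_mul a).add (integrable_const b)) integrable_condExp
  refine ⟨hint, ?_⟩
  calc ∫ ω, φ (μ[Z | m] ω) ∂μ ≤ ∫ ω, μ[φ ∘ Z | m] ω ∂μ :=
        integral_mono_ae hint integrable_condExp hjensen
    _ = ∫ ω, φ (Z ω) ∂μ := integral_condExp hm

lemma integral_le_of_integral_le_integral_combination {A W : Ω → ℝ} {t : ℝ} (ht : 0 < t)
    (ht1 : t ≤ 1) {G : ℝ → ℝ} (hG : ConvexOn ℝ univ G)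
    (hGA : Integrable (fun ω => G (A ω)) μ) (hGW : Integrable (fun ω => G (W ω)) μ)
    (hGZ : Integrable (fun ω => G (t * A ω + (1 - t) * W ω)) μ)
    (hle : ∫ ω, G (W ω) ∂μ ≤ ∫ ω, G (t * A ω + (1 - t) * W ω) ∂μ) :
    ∫ ω, G (W ω) ∂μ ≤ ∫ ω, G (A ω) ∂μ := by
  have hjensen : ∫ ω, G (t * A ω + (1 - t) * W ω) ∂μ
      ≤ t * ∫ ω, G (A ω) ∂μ + (1 - t) * ∫ ω, G (W ω) ∂μ := by
    rw [← integral_const_mul, ← integral_const_mul,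
      ← integral_add (hGA.const_mul _) (hGW.const_mul _)]
    exact integral_mono hGZ ((hGA.const_mul _).add (hGW.const_mul _))
      fun ω => hG.2 trivial trivial ht.le (sub_nonneg.2 ht1) (by ring)
  nlinarith

theorem ConvexOrdGE.of_combination [IsFiniteMeasure μ] {A W : Ω → ℝ} (hA : Integrable A μ)
    (hW : Integrable W μ) {t : ℝ} (ht : 0 < t) (ht1 : t ≤ 1)
    (h : ConvexOrdGE μ (fun ω => t * A ω + (1 - t) * W ω) W) : ConvexOrdGE μ A W := by
  intro φ hφ hφA
  have hZ : Integrable (fun ω => t * A ω + (1 - t) * W ω) μ :=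
    (hA.const_mul t).add (hW.const_mul (1 - t))
  obtain ⟨a, b, hab⟩ := hφ.exists_affine_partialSups_tendsto
  set G := partialSups fun i (y : ℝ) => a i * y + b i
  have hGconv : ∀ n, ConvexOn ℝ univ (G n) := convexOn_partialSups fun i =>
    ((LinearMap.mulLeft ℝ (a i)).convexOn convex_univ).add_const (b i)
  have hGint : ∀ n {f : Ω → ℝ}, Integrable f μ → Integrable (fun ω => G n (f ω)) μ := by
    intro n f hf
    convert integrable_partialSups (fun i => (hf.const_mul (a i)).add (integrable_const (b i))) n
      using 1
    ext ω
    simp only [G, Pi.partialSups_apply, Pi.add_apply]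
  have hGbound : ∀ n, ∫ ω, G n (W ω) ∂μ ≤ ∫ ω, φ (A ω) ∂μ := fun n =>
    (integral_le_of_integral_le_integral_combination ht ht1 (hGconv n) (hGint n hA)
      (hGint n hW) (hGint n hZ) (h (G n) (hGconv n) (hGint n hZ)).2).trans
      (integral_mono (hGint n hA) hφA fun ω => (hab (A ω)).1 n)
  have hφW : Integrable (fun ω => φ (W ω)) μ :=
    integrable_of_tendsto_of_monotone_of_integral_le (fun n => hGint n hW)
      (ae_of_all _ fun ω n k hnk => G.monotone hnk (W ω)) (ae_of_all _ fun ω => (hab (W ω)).2)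
      hGbound
  have hφZ : Integrable (fun ω => φ (t * A ω + (1 - t) * W ω)) μ :=
    integrable_of_le_of_le
      ((continuousOn_univ.1 (hφ.continuousOn isOpen_univ)).comp_aestronglyMeasurable hZ.1)
      (ae_of_all _ fun ω => (hab _).1 0)
      (ae_of_all _ fun ω => hφ.2 trivial trivial ht.le (sub_nonneg.2 ht1) (by ring))
      (hGint 0 hZ) ((hφA.const_mul t).add (hφW.const_mul (1 - t)))
  exact ⟨hφW, integral_le_of_integral_le_integral_combination ht ht1 hφ hφA hφW hφZ
    (h φ hφ hφZ).2⟩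

theorem not_convexOrdGE_add_one_add_mul [IsFiniteMeasure μ] {U V : Ω → ℝ}
    (hU : Integrable U μ) (hV : Integrable V μ) {φ : ℝ → ℝ} (hφ : ConvexOn ℝ univ φ) {c : ℝ}
    (hc : 0 < c) (hφU : Integrable (fun ω => φ ((1 + c) / c * U ω)) μ)
    (hφV : ¬ Integrable (fun ω => φ ((1 + c) * V ω)) μ) :
    ¬ ConvexOrdGE μ (fun ω => U ω + V ω) (fun ω => (1 + c) * V ω) := by
  intro h
  have hcomb : ConvexOrdGE μ
      (fun ω => c / (1 + c) * ((1 + c) / c * U ω) + (1 - c / (1 + c)) * ((1 + c) * V ω))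
      (fun ω => (1 + c) * V ω) := by
    convert h using 2 with ω
    field_simp
    ring
  have hord := hcomb.of_combination (hU.const_mul _) (hV.const_mul _) (by positivity)
    (div_le_one_of_le₀ (by linarith) (by positivity))
  exact hφV (hord φ hφ hφU).1

end ConvexOrder

lemma condExp_cent_ae_eq {α : Type*} {m mα : MeasurableSpace α} {μ : Measure α}
    [IsProbabilityMeasure μ] (hm : m ≤ mα) {Y g : α → ℝ} (hY : Integrable Y μ)
    (hg : μ[Y | m] =ᵐ[μ] g) :
    μ[cent μ Y | m] =ᵐ[μ] cent μ g := by
  have hmean : ∫ ω, Y ω ∂μ = ∫ ω, g ω ∂μ := (integral_condExp hm).symm.trans (integral_congr_ae hg)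
  filter_upwards [condExp_sub (m := m) hY (integrable_const (∫ ω, Y ω ∂μ)), hg] with ω h1 h2
  change μ[Y - fun _ => ∫ ω, Y ω ∂μ | m] ω = g ω - ∫ ω, g ω ∂μ
  rw [h1, Pi.sub_apply, h2, condExp_const hm, hmean]

lemma cent_const_add_dotp {μ : Measure Ω} [IsProbabilityMeasure μ] {p : ℕ}
    {X : Ω → EuclideanSpace ℝ (Fin p)} (hX : Integrable X μ) (α₀ : ℝ)
    (β₀ : EuclideanSpace ℝ (Fin p)) :
    cent μ (fun ω => α₀ + dotp (X ω) β₀) = fun ω => dotp (centV μ X ω) β₀ := by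
  funext ω
  simp only [cent, centV, dotp_eq_inner, inner_sub_right]
  rw [integral_add (integrable_const _) (hX.const_inner β₀), integral_inner hX, integral_const]
  simp

theorem stmt8_general (μ : Measure Ω) [IsProbabilityMeasure μ] {p : ℕ}
    (Y : Ω → ℝ) (X : Ω → EuclideanSpace ℝ (Fin p))
    (hXm : Measurable X)
    (hY2 : MemLp Y 2 μ) (hX2 : MemLp X 2 μ)
    (α₀ : ℝ) (β₀ : EuclideanSpace ℝ (Fin p))
    (hmod : μ[Y | MeasurableSpace.comap X inferInstance]
      =ᵐ[μ] fun ω => α₀ + dotp (X ω) β₀)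
    (hφ : ∃ φ : ℝ → ℝ, ConvexOn ℝ Set.univ φ ∧ ∀ l : ℝ, 1 < l →
      Integrable (fun ω => φ (l * (cent μ Y ω - dotp (centV μ X ω) β₀))) μ ∧
      ¬ Integrable (fun ω => φ (l * dotp (centV μ X ω) β₀)) μ) :
    (∀ c : ℝ, 0 < c → ((1 + c) • β₀) ∉ Bset μ Y X) ∧ β₀ ∈ frontier (Bset μ Y X) := by
  obtain ⟨φ, hφconv, hφint⟩ := hφ
  have hY : Integrable Y μ := hY2.integrable one_le_two
  have hX : Integrable X μ := hX2.integrable one_le_two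
  set V : Ω → ℝ := fun ω => dotp (centV μ X ω) β₀
  have hX₀ : Integrable (centV μ X) μ := hX.sub (integrable_const _)
  have hV : Integrable V μ := by simpa only [V, dotp_eq_inner] using hX₀.const_inner β₀
  have hU : Integrable (fun ω => cent μ Y ω - V ω) μ := (hY.sub (integrable_const _)).sub hV
  have hnotMem : ∀ c : ℝ, 0 < c → (1 + c) • β₀ ∉ Bset μ Y X := by
    intro c hc hmem
    refine not_convexOrdGE_add_one_add_mul hU hV hφconv hc
      (hφint _ ((one_lt_div hc).2 (by linarith))).1 (hφint (1 + c) (by linarith)).2 ?_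
    simpa only [Bset, mem_ofPred_eq, dotp_smul_right, sub_add_cancel] using hmem
  have hmem : β₀ ∈ Bset μ Y X := by
    have hm := measurable_iff_comap_le.mp hXm
    refine (convexOrdGE_condExp (Z := cent μ Y) hm (hY.sub (integrable_const _))).congr_right ?_
    filter_upwards [condExp_cent_ae_eq hm hY hmod] with ω hω
    rw [hω, cent_const_add_dotp hX]
  exact ⟨hnotMem, mem_frontier_of_forall_one_add_smul_notMem hmem hnotMem⟩

/-- Under Assumption 1 with `U = Y₀ - X₀'β₀`, if there is a convex `φ`
with `E[φ(λU)] < E[φ(λ X₀'β₀)] = ∞` for all `λ > 1`, then `(1+c)β₀ ∉ B` for every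
`c > 0`; consequently `β₀` lies on the boundary of `B`. -/
theorem stmt8 (μ : Measure Ω) [IsProbabilityMeasure μ] {p : ℕ}
    (Y : Ω → ℝ) (X : Ω → EuclideanSpace ℝ (Fin p))
    (hYm : Measurable Y) (hXm : Measurable X)
    (hY2 : MemLp Y 2 μ) (hX2 : MemLp X 2 μ)
    (hVarY : 0 < variance Y μ) (hVarX : (covMatrix μ X).det ≠ 0)
    (α₀ : ℝ) (β₀ : EuclideanSpace ℝ (Fin p))
    (hmod : μ[Y | MeasurableSpace.comap X inferInstance]
      =ᵐ[μ] fun ω => α₀ + dotp (X ω) β₀)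
    (hφ : ∃ φ : ℝ → ℝ, ConvexOn ℝ Set.univ φ ∧ ∀ l : ℝ, 1 < l →
      Integrable (fun ω => φ (l * (cent μ Y ω - dotp (centV μ X ω) β₀))) μ ∧
      ¬ Integrable (fun ω => φ (l * dotp (centV μ X ω) β₀)) μ) :
    (∀ c : ℝ, 0 < c → ((1 + c) • β₀) ∉ Bset μ Y X) ∧ β₀ ∈ frontier (Bset μ Y X) :=
  stmt8_general μ Y X hXm hY2 hX2 α₀ β₀ hmod hφ
end
end
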